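/- arXiv:1909.05499 — 3 statements merged into one kernel-verified Lean document; each statement's English description precedes it below -/
import Mathlib

section
/- For any p, p* ∈ ℝ^m, r ∈ ℝ, a ∈ ℝ^m, and d ∈ ℝ^m, the following pointwise identity holds: h(p) − h(p*) = φ(p*)^⊤ (p − p*) + ∫_{a^⊤p}^{a^⊤p*} ( 1{r > v} − 1{r > a^⊤p*} ) dv, where h(q) = d^⊤q + (r − a^⊤q)^+ and φ(q) = d − a·1{r > a^⊤q}. -/
open Finset intervalIntegral

lemma step_antitone (r : ℝ) : Antitone (fun v : ℝ => if v < r then (1:ℝ) else 0) := by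
  intro v w hvw
  simp only
  split_ifs with h1 h2 h2 <;> norm_num <;> linarith

lemma step_intble (r s t : ℝ) :
    IntervalIntegrable (fun v : ℝ => if v < r then (1:ℝ) else 0) MeasureTheory.volume s t :=
  (step_antitone r).intervalIntegrable

lemma integral_to_r (r s : ℝ) :
    (∫ v in s..r, (if v < r then (1:ℝ) else 0)) = max (r - s) 0 := by
  rcases le_or_gt s r with h | h
  · have hcong : (∫ v in s..r, (if v < r then (1:ℝ) else 0)) = ∫ v in s..r, (1:ℝ) := by
      apply intervalIntegral.integral_congr_ae
      filter_upwards [MeasureTheory.compl_mem_ae_iff.mpr (Real.volume_singleton (a := r))]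
        with v hv hmem
      have hne : v ≠ r := hv
      rw [Set.uIoc_of_le h] at hmem
      have : v < r := lt_of_le_of_ne hmem.2 hne
      simp [this]
    rw [hcong]
    simp [max_eq_left (by linarith : (0:ℝ) ≤ r - s)]
  · have hcong : (∫ v in s..r, (if v < r then (1:ℝ) else 0)) = ∫ v in s..r, (0:ℝ) := by
      apply intervalIntegral.integral_congr
      intro v hv
      rw [Set.uIcc_of_ge (le_of_lt h)] at hv
      have : ¬ v < r := not_lt.mpr hv.1
      simp [this]
    rw [hcong]
    simp [max_eq_right (by linarith : r - s ≤ (0:ℝ))]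

lemma integral_step (r s t : ℝ) :
    (∫ v in s..t, (if v < r then (1:ℝ) else 0)) = max (r - s) 0 - max (r - t) 0 := by
  have hsplit := intervalIntegral.integral_add_adjacent_intervals
    (step_intble r s r) (step_intble r r t)
  have h1 := integral_to_r r s
  have h2 := integral_to_r r t
  have h3 : (∫ v in r..t, (if v < r then (1:ℝ) else 0)) = - max (r - t) 0 := by
    rw [intervalIntegral.integral_symm t r, h2]
  linarith [hsplit]

/-- Knight-type pointwise identity:
`h(p) - h(p*) = φ(p*)^⊤ (p - p*) + ∫_{a^⊤p}^{a^⊤p*} (1{r > v} - 1{r > a^⊤p*}) dv`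
where `h(q) = d^⊤ q + (r - a^⊤ q)^+` and `φ(q) = d - a · 1{r > a^⊤ q}`. -/
theorem stmt_3 (m : ℕ) (p pstar d a : Fin m → ℝ) (r : ℝ) :
    (∑ i, d i * p i + max (r - ∑ i, a i * p i) 0)
        - (∑ i, d i * pstar i + max (r - ∑ i, a i * pstar i) 0)
      = (∑ i, (d i - a i * (if (∑ i', a i' * pstar i') < r then (1:ℝ) else 0)) * (p i - pstar i))
        + ∫ v in (∑ i, a i * p i)..(∑ i, a i * pstar i),
            ((if v < r then (1:ℝ) else 0)
              - (if (∑ i, a i * pstar i) < r then (1:ℝ) else 0)) := by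
  set s := ∑ i, a i * p i with hs
  set t := ∑ i, a i * pstar i with ht
  set c : ℝ := if t < r then (1:ℝ) else 0 with hc
  have hint : (∫ v in s..t, ((if v < r then (1:ℝ) else 0) - c))
      = (max (r - s) 0 - max (r - t) 0) - (t - s) * c := by
    rw [intervalIntegral.integral_sub (step_intble r s t) (intervalIntegrable_const),
      integral_step, intervalIntegral.integral_const]
    simp [smul_eq_mul]
  rw [hint]
  have hsum : (∑ i, (d i - a i * c) * (p i - pstar i))
      = (∑ i, d i * p i) - (∑ i, d i * pstar i) - c * s + c * t := by
    rw [hs, ht, Finset.mul_sum, Finset.mul_sum, ← Finset.sum_sub_distrib,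
      ← Finset.sum_sub_distrib, ← Finset.sum_add_distrib]
    apply Finset.sum_congr rfl
    intro i _
    ring
  rw [hsum]
  ring
end

section
/- Let a sequence z₀ = 0 and z_{t+1} = z_t + √(z_t)/((n−t−1)√t) + 1/(n−t−1)² for t = 0,…,n−1. Then: (i) z_t ≤ 4t/(n−t−1)² for all t ≤ n/2, and (ii) z_t ≤ 16/(n−t−2) for n/2 ≤ t ≤ n−3, and consequently ∑_{t=1}^{n−3} z_t ≤ 32 log n for all n > 3. -/
open Finset

lemma sqrt_le_of_sq' (x y : ℝ) (hy : 0 ≤ y) (h : x ≤ y^2) : Real.sqrt x ≤ y := by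
  calc Real.sqrt x ≤ Real.sqrt (y^2) := Real.sqrt_le_sqrt h
    _ = y := Real.sqrt_sq hy

lemma mid_le' (x s d c : ℝ) (hd : 0 < d) (hs : 0 < s) (h : Real.sqrt x * d ≤ c * s) :
    Real.sqrt x / (d * s) ≤ c / d^2 := by
  rw [div_le_div_iff₀ (by positivity) (by positivity)]
  nlinarith [mul_le_mul_of_nonneg_right h hd.le]

lemma arith1' (t d A B C : ℝ) (ht : 0 ≤ t) (hd : 2 ≤ d)
    (hA : A ≤ 4*t/d^2) (hB : B ≤ 2/d^2) (hC : C ≤ 1/d^2) :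
    A + B + C ≤ 4*(t+1)/(d-1)^2 := by
  have h1 : (0:ℝ) < d := by linarith
  have h2 : (0:ℝ) < d - 1 := by linarith
  have key : (4*t+3)/d^2 ≤ 4*(t+1)/(d-1)^2 := by
    rw [div_le_div_iff₀ (by positivity) (by positivity)]
    nlinarith [mul_nonneg ht (by linarith : (0:ℝ) ≤ 2*d-1)]
  have h3 : 4*t/d^2 + 2/d^2 + 1/d^2 = (4*t+3)/d^2 := by ring
  linarith

lemma arith2' (d A B C : ℝ) (hd : 3 ≤ d)
    (hA : A ≤ 16/(d-1)) (hB : B ≤ 4/(d-1)^2) (hC : C ≤ 1/d^2) :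
    A + B + C ≤ 16/(d-2) := by
  have h1 : (0:ℝ) < d - 1 := by linarith
  have h2 : (0:ℝ) < d - 2 := by linarith
  have h0 : (0:ℝ) < d := by linarith
  have hC' : C ≤ 1/(d-1)^2 := by
    refine hC.trans ?_
    apply one_div_le_one_div_of_le (by positivity)
    nlinarith
  have key : 16/(d-1) + 5/(d-1)^2 ≤ 16/(d-2) := by
    rw [div_add_div _ _ h1.ne' (pow_ne_zero 2 h1.ne'), div_le_div_iff₀ (by positivity) h2]
    nlinarith [mul_nonneg (by linarith : (0:ℝ) ≤ d-1) (by linarith : (0:ℝ) ≤ 11*d-6)]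
  have h5 : 4/(d-1)^2 + 1/(d-1)^2 = 5/(d-1)^2 := by ring
  linarith

lemma arith3' (t n d A B C : ℝ) (hd : d = n - t - 1) (h1 : n/2 ≤ t+1) (h2 : t ≤ n/2)
    (h3 : t+1 ≤ n-3) (hn : 4 ≤ n)
    (hA : A ≤ 4*t/d^2) (hB : B ≤ 2/d^2) (hC : C ≤ 1/d^2) :
    A + B + C ≤ 16/(d-2) := by
  subst hd
  have hdp : (0:ℝ) < n - t - 1 := by linarith
  have hd2 : (0:ℝ) < n - t - 1 - 2 := by linarith
  have key : (4*t+3)/(n-t-1)^2 ≤ 16/(n-t-1-2) := by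
    rw [div_le_div_iff₀ (by positivity) hd2]
    nlinarith [sq_nonneg (n - 2*t), sq_nonneg (n-2-2*t)]
  have h4 : 4*t/(n-t-1)^2 + 2/(n-t-1)^2 + 1/(n-t-1)^2 = (4*t+3)/(n-t-1)^2 := by ring
  linarith

lemma log_gap' (a : ℝ) (ha : 2 ≤ a) : 1/a ≤ Real.log a - Real.log (a-1) := by
  have h1 : (0:ℝ) < a - 1 := by linarith
  have h0 : (0:ℝ) < a := by linarith
  have hl := Real.log_le_sub_one_of_pos (show (0:ℝ) < (a-1)/a by positivity)
  rw [Real.log_div h1.ne' h0.ne'] at hl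
  have h2 : (a-1)/a - 1 = -(1/a) := by field_simp; ring
  linarith

lemma one_le_log' (x : ℝ) (hx : 4 ≤ x) : 1 ≤ Real.log x := by
  have h : Real.exp 1 ≤ x := by nlinarith [Real.exp_one_lt_d9]
  calc (1:ℝ) = Real.log (Real.exp 1) := (Real.log_exp 1).symm
    _ ≤ Real.log x := Real.log_le_log (Real.exp_pos 1) h

/-- Deterministic recursion bound: if `z₀ = 0` and
`z_{t+1} = z_t + √(z_t)/((n-t-1)√t) + 1/(n-t-1)²` for `t < n`, then
(i) `z_t ≤ 4t/(n-t-1)²` for `t ≤ n/2`, (ii) `z_t ≤ 16/(n-t-2)` for `n/2 ≤ t ≤ n-3`,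
and `∑_{t=1}^{n-3} z_t ≤ 32 log n` for `n > 3`. -/
theorem stmt_17 (n : ℕ) (hn : 3 < n) (z : ℕ → ℝ) (h0 : z 0 = 0)
    (hrec : ∀ t : ℕ, t < n →
      z (t + 1) = z t + Real.sqrt (z t) / (((n : ℝ) - t - 1) * Real.sqrt t)
        + 1 / ((n : ℝ) - t - 1) ^ 2) :
    (∀ t : ℕ, (t : ℝ) ≤ (n : ℝ) / 2 → z t ≤ 4 * t / ((n : ℝ) - t - 1) ^ 2)
    ∧ (∀ t : ℕ, (n : ℝ) / 2 ≤ (t : ℝ) → t ≤ n - 3 → z t ≤ 16 / ((n : ℝ) - t - 2))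
    ∧ ∑ t ∈ Finset.Icc 1 (n - 3), z t ≤ 32 * Real.log n := by
  have key1 : ∀ t : ℕ, (t : ℝ) ≤ (n : ℝ) / 2 → z t ≤ 4 * t / ((n : ℝ) - t - 1) ^ 2 := by

    have hn4 : (4:ℝ) ≤ n := by exact_mod_cast hn
    intro t
    induction t with
    | zero => intro _; simp [h0]
    | succ t ih =>
      intro ht
      push_cast at ht
      have hd : (0:ℝ) < (n:ℝ) - t - 1 := by linarith
      have hd2 : (2:ℝ) ≤ (n:ℝ) - t - 1 := by linarith
      have htn : t < n := by
        have : (t:ℝ) < n := by linarith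
        exact_mod_cast this
      have ihh := ih (by linarith)
      rw [hrec t htn]
      push_cast
      have hsq : Real.sqrt (z t) ≤ 2 * Real.sqrt t / ((n:ℝ) - t - 1) := by
        apply sqrt_le_of_sq' _ _ (by positivity)
        have he : (2 * Real.sqrt t / ((n:ℝ) - t - 1))^2 = 4 * t / ((n:ℝ)-t-1)^2 := by
          rw [div_pow, mul_pow, Real.sq_sqrt (Nat.cast_nonneg t)]
          norm_num
        rw [he]; exact ihh
      have hmid : Real.sqrt (z t) / (((n:ℝ) - t - 1) * Real.sqrt t) ≤ 2/((n:ℝ)-t-1)^2 := by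
        rcases Nat.eq_zero_or_pos t with rfl | hpos
        · rw [h0]
          simp
          positivity
        · have hs : (0:ℝ) < Real.sqrt t := Real.sqrt_pos.2 (by exact_mod_cast hpos)
          apply mid_le' _ _ _ _ hd hs
          calc Real.sqrt (z t) * ((n:ℝ)-t-1) ≤ (2 * Real.sqrt t / ((n:ℝ)-t-1)) * ((n:ℝ)-t-1) :=
                mul_le_mul_of_nonneg_right hsq hd.le
            _ = 2 * Real.sqrt t := by field_simp
      rw [show ((n:ℝ) - (↑t + 1) - 1) = ((n:ℝ) - ↑t - 1 - 1) from by ring]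
      exact arith1' t _ (z t) _ _ (Nat.cast_nonneg t) hd2 ihh hmid le_rfl
  have key2 : ∀ t : ℕ, (n : ℝ) / 2 ≤ (t : ℝ) → t ≤ n - 3 → z t ≤ 16 / ((n : ℝ) - t - 2) := by

    have hn4 : (4:ℝ) ≤ n := by exact_mod_cast hn
    intro t
    induction t with
    | zero => intro h _; norm_num at h; linarith
    | succ t ih =>
      intro hge hle
      have hle' : (t:ℝ) + 1 ≤ (n:ℝ) - 3 := by
        have h' : t + 4 ≤ n := by omega
        have h'' := (Nat.cast_le (α := ℝ)).2 h'
        push_cast at h''; linarith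
      push_cast at hge
      have htn : t < n := by omega
      have hd : (0:ℝ) < (n:ℝ) - t - 1 := by linarith
      rw [hrec t htn]
      rw [show ((n:ℝ) - (↑(t+1):ℕ) - 2) = ((n:ℝ) - ↑t - 1 - 2) from by push_cast; ring]
      by_cases hc : (n:ℝ)/2 ≤ (t:ℝ)
      · -- drift case
        have iht : z t ≤ 16 / ((n:ℝ) - t - 1 - 1) := by
          rw [show ((n:ℝ) - ↑t - 1 - 1) = ((n:ℝ) - ↑t - 2) from by ring]
          exact ih hc (by omega)
        have hd3 : (3:ℝ) ≤ (n:ℝ) - t - 1 := by linarith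
        have h1pos : (0:ℝ) < (n:ℝ) - t - 2 := by linarith
        have htpos : (0:ℝ) < (t:ℝ) := by linarith
        have hsq : Real.sqrt (z t) ≤ 4 / Real.sqrt ((n:ℝ) - t - 2) := by
          apply sqrt_le_of_sq' _ _ (by positivity)
          have he : (4 / Real.sqrt ((n:ℝ)-t-2))^2 = 16/((n:ℝ)-t-2) := by
            rw [div_pow, Real.sq_sqrt h1pos.le]; norm_num
          rw [he]
          rw [show ((n:ℝ) - ↑t - 1 - 1) = ((n:ℝ) - ↑t - 2) from by ring] at iht
          exact iht
        have hsp : (0:ℝ) < Real.sqrt ((n:ℝ)-t-2) := Real.sqrt_pos.2 h1pos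
        have hmid : Real.sqrt (z t) / (((n:ℝ)-t-1) * Real.sqrt t)
            ≤ 4/(((n:ℝ)-t-1-1)^2) := by
          rw [div_le_div_iff₀ (mul_pos hd (Real.sqrt_pos.2 htpos)) (pow_pos (by linarith) 2)]
          have hms := Real.mul_self_sqrt h1pos.le
          calc Real.sqrt (z t) * ((n:ℝ)-t-1-1)^2
              ≤ (4/Real.sqrt ((n:ℝ)-t-2)) * ((n:ℝ)-t-1-1)^2 :=
                mul_le_mul_of_nonneg_right hsq (by positivity)
            _ = 4 * (((n:ℝ)-t-2) * Real.sqrt ((n:ℝ)-t-2)) := by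
                rw [div_mul_eq_mul_div, div_eq_iff hsp.ne']
                linear_combination (-4*((n:ℝ)-↑t-2)) * hms
            _ ≤ 4 * (((n:ℝ)-t-1) * Real.sqrt t) := by
                apply mul_le_mul_of_nonneg_left ?_ (by norm_num)
                exact mul_le_mul (by linarith) (Real.sqrt_le_sqrt (by linarith))
                  (Real.sqrt_nonneg _) (by linarith)
        exact arith2' ((n:ℝ)-t-1) (z t) _ _ hd3 iht hmid le_rfl
      · -- base case from key1
        have hlt : (t:ℝ) < (n:ℝ)/2 := not_le.1 hc
        have ihh := key1 t hlt.le
        have hpos : 1 ≤ t := by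
          rcases Nat.eq_zero_or_pos t with rfl | hp
          · exfalso; norm_num at hge; linarith
          · exact hp
        have hs : (0:ℝ) < Real.sqrt t := Real.sqrt_pos.2 (by exact_mod_cast hpos)
        have hsq : Real.sqrt (z t) ≤ 2 * Real.sqrt t / ((n:ℝ) - t - 1) := by
          apply sqrt_le_of_sq' _ _ (by positivity)
          have he : (2 * Real.sqrt t / ((n:ℝ) - t - 1))^2 = 4 * t / ((n:ℝ)-t-1)^2 := by
            rw [div_pow, mul_pow, Real.sq_sqrt (Nat.cast_nonneg t)]
            norm_num
          rw [he]; exact ihh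
        have hmid : Real.sqrt (z t) / (((n:ℝ) - t - 1) * Real.sqrt t) ≤ 2/((n:ℝ)-t-1)^2 := by
          apply mid_le' _ _ _ _ hd hs
          calc Real.sqrt (z t) * ((n:ℝ)-t-1) ≤ (2 * Real.sqrt t / ((n:ℝ)-t-1)) * ((n:ℝ)-t-1) :=
                mul_le_mul_of_nonneg_right hsq hd.le
            _ = 2 * Real.sqrt t := by field_simp
        exact arith3' t n ((n:ℝ)-t-1) (z t) _ _ rfl hge hlt.le hle' hn4 ihh hmid le_rfl
  refine ⟨key1, key2, ?_⟩

  have hn4 : (4:ℝ) ≤ n := by exact_mod_cast hn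
  have key3 : ∀ t ∈ Finset.Icc 1 (n-3), z t ≤ 16/((n:ℝ) - t - 2) := by
    intro t ht
    rw [Finset.mem_Icc] at ht
    obtain ⟨ht1, ht2⟩ := ht
    by_cases hc : (n:ℝ)/2 ≤ (t:ℝ)
    · exact key2 t hc ht2
    · have hcc : (t:ℝ) ≤ (n:ℝ)/2 := (not_le.1 hc).le
      refine (key1 t hcc).trans ?_
      have hr2 : (t:ℝ) ≤ (n:ℝ) - 3 := by
        have h' : t + 3 ≤ n := by omega
        have h'' := (Nat.cast_le (α := ℝ)).2 h'
        push_cast at h''; linarith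
      have ht1' : (1:ℝ) ≤ (t:ℝ) := by exact_mod_cast ht1
      have e1 : (n:ℝ) - 2 ≤ 2*((n:ℝ) - t - 1) := by linarith
      have e2 : (0:ℝ) ≤ (n:ℝ) - 2 := by linarith
      have hdp : (0:ℝ) < (n:ℝ) - t - 1 := by linarith
      rw [div_le_div_iff₀ (by positivity) (by linarith : (0:ℝ) < (n:ℝ) - t - 2)]
      nlinarith [mul_le_mul e1 e1 e2 (by linarith), sq_nonneg ((n:ℝ) - 2 - 2*(t:ℝ)),
        sq_nonneg ((n:ℝ) - t - 1)]
  have hlog1 : 1 ≤ Real.log n := one_le_log' _ hn4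
  have hc4 : ((n-4:ℕ):ℝ) = (n:ℝ) - 4 := by
    have h4 : 4 ≤ n := by omega
    push_cast [h4]; ring
  have hstep : ∑ t ∈ Finset.Icc 1 (n-3), z t ≤ ∑ t ∈ Finset.Icc 1 (n-3), 16/((n:ℝ)-t-2) :=
    Finset.sum_le_sum key3
  have hsplit : n - 3 = (n-4) + 1 := by omega
  have hlast : 16/((n:ℝ) - (((n-4)+1 : ℕ):ℝ) - 2) = 16 := by
    push_cast [hc4]
    rw [show (n:ℝ) - ((n:ℝ) - 4 + 1) - 2 = 1 from by ring]
    norm_num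
  -- telescoping bound for the partial sum
  set F : ℕ → ℝ := fun i => -Real.log ((n:ℝ) - i - 3) with hF
  have h1 : ∀ i ∈ Finset.range (n-4), 16/((n:ℝ)-(1+i:ℕ)-2) ≤ 16*(F (i+1) - F i) := by
    intro i hi
    rw [Finset.mem_range] at hi
    have hi5 : (i:ℝ) + 5 ≤ n := by
      have h' : i + 5 ≤ n := by omega
      exact_mod_cast h'
    have hgap := log_gap' ((n:ℝ) - i - 3) (by linarith)
    simp only [hF]
    push_cast
    have he : (n:ℝ) - (1+i) - 2 = (n:ℝ) - i - 3 := by ring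
    have he2 : (n:ℝ) - (i+1) - 3 = ((n:ℝ) - i - 3) - 1 := by ring
    rw [he, he2]
    have he3 : 16/((n:ℝ)-i-3) = 16*(1/((n:ℝ)-i-3)) := by ring
    rw [he3]
    linarith [hgap]
  have hsum : ∑ t ∈ Finset.Icc 1 (n-4), 16/((n:ℝ)-t-2) ≤ 16 * Real.log ((n:ℝ)-3) := by
    rw [← Finset.Ico_add_one_right_eq_Icc, Finset.sum_Ico_eq_sum_range]
    have hr : n - 4 + 1 - 1 = n - 4 := by omega
    rw [hr]
    calc ∑ i ∈ Finset.range (n-4), 16/((n:ℝ)-(1+i:ℕ)-2)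
        ≤ ∑ i ∈ Finset.range (n-4), 16*(F (i+1) - F i) := Finset.sum_le_sum h1
      _ = 16 * (F (n-4) - F 0) := by rw [← Finset.mul_sum, Finset.sum_range_sub]
      _ ≤ 16 * Real.log ((n:ℝ)-3) := by
          simp only [hF]
          rw [hc4]
          rw [show (n:ℝ) - ((n:ℝ)-4) - 3 = 1 by ring, Real.log_one]
          norm_num
  have hlogmono : Real.log ((n:ℝ)-3) ≤ Real.log n :=
    Real.log_le_log (by linarith) (by linarith)
  calc ∑ t ∈ Finset.Icc 1 (n-3), z t
      ≤ ∑ t ∈ Finset.Icc 1 (n-3), 16/((n:ℝ)-t-2) := hstep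
    _ = (∑ t ∈ Finset.Icc 1 (n-4), 16/((n:ℝ)-t-2)) + 16/((n:ℝ) - (((n-4)+1 : ℕ):ℝ) - 2) := by
        rw [hsplit]
        exact Finset.sum_Icc_succ_top (by omega : 1 ≤ (n-4)+1) _
    _ ≤ 16 * Real.log ((n:ℝ)-3) + 16 := by rw [hlast]; linarith
    _ ≤ 32 * Real.log n := by linarith
end

section
/- Under the same hypotheses as the previous statement, if additionally p*_i = p̃*_i = 0 for all i in a set I_N (the non-binding coordinates), then ‖p* − p̃*‖₂² ≤ (1/(λ²λ_min²)) ∑_{i ∉ I_N} (d_i − d̃_i)², i.e. only the binding coordinates of the capacity difference matter. -/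
open Finset MeasureTheory

/-- Refined capacity-Lipschitz bound: under the hypotheses of the previous statement,
if moreover `p*` and `p̃*` both vanish on the non-binding index set `I_N`, then
`‖p* - p̃*‖₂² ≤ (1/K²) ∑_{i ∉ I_N} (d_i - d̃_i)²`. -/
theorem stmt_19 {Ω : Type*} [MeasurableSpace Ω] (μ : Measure Ω) [IsProbabilityMeasure μ]
    (m : ℕ) (r : Ω → ℝ) (a : Ω → Fin m → ℝ) (d dt : Fin m → ℝ) (K : ℝ) (hK : 0 < K)
    (pstar ptstar : Fin m → ℝ) (hp : ∀ i, 0 ≤ pstar i) (hpt : ∀ i, 0 ≤ ptstar i)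
    (IN : Finset (Fin m))
    (hzero : ∀ i ∈ IN, pstar i = 0 ∧ ptstar i = 0)
    (hmin : ∀ q : Fin m → ℝ, (∀ i, 0 ≤ q i) →
      (∑ i, d i * pstar i + ∫ ω, max (r ω - ∑ i, a ω i * pstar i) 0 ∂μ)
        ≤ ∑ i, d i * q i + ∫ ω, max (r ω - ∑ i, a ω i * q i) 0 ∂μ)
    (hmint : ∀ q : Fin m → ℝ, (∀ i, 0 ≤ q i) →
      (∑ i, dt i * ptstar i + ∫ ω, max (r ω - ∑ i, a ω i * ptstar i) 0 ∂μ)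
        ≤ ∑ i, dt i * q i + ∫ ω, max (r ω - ∑ i, a ω i * q i) 0 ∂μ)
    (hgrow : ∀ q : Fin m → ℝ, (∀ i, 0 ≤ q i) →
      K / 2 * ∑ i, (q i - pstar i) ^ 2
        ≤ (∑ i, d i * q i + ∫ ω, max (r ω - ∑ i, a ω i * q i) 0 ∂μ)
          - (∑ i, d i * pstar i + ∫ ω, max (r ω - ∑ i, a ω i * pstar i) 0 ∂μ))
    (hgrowt : ∀ q : Fin m → ℝ, (∀ i, 0 ≤ q i) →
      K / 2 * ∑ i, (q i - ptstar i) ^ 2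
        ≤ (∑ i, dt i * q i + ∫ ω, max (r ω - ∑ i, a ω i * q i) 0 ∂μ)
          - (∑ i, dt i * ptstar i + ∫ ω, max (r ω - ∑ i, a ω i * ptstar i) 0 ∂μ)) :
    ∑ i, (pstar i - ptstar i) ^ 2
      ≤ (1 / K ^ 2) * ∑ i ∈ Finset.univ \ IN, (d i - dt i) ^ 2 := by
  set S : ℝ := ∑ i, (pstar i - ptstar i) ^ 2 with hS
  have hSnn : 0 ≤ S := Finset.sum_nonneg fun i _ => sq_nonneg _
  have hA : (0:ℝ) ≤ ∑ i ∈ Finset.univ \ IN, (d i - dt i) ^ 2 :=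
    Finset.sum_nonneg fun i _ => sq_nonneg _
  have h1 := hgrow ptstar hpt
  have h2 := hgrowt pstar hp
  have hsq : ∀ i, (ptstar i - pstar i) ^ 2 = (pstar i - ptstar i) ^ 2 := fun i => by ring
  rw [Finset.sum_congr rfl fun i _ => hsq i] at h1
  have hKS : K * S ≤ ∑ i, (d i - dt i) * (ptstar i - pstar i) := by
    have : K * S = K / 2 * S + K / 2 * S := by ring
    rw [this]
    have heq : ∑ i, (d i - dt i) * (ptstar i - pstar i)
        = (∑ i, d i * ptstar i - ∑ i, d i * pstar i)
          + (∑ i, dt i * pstar i - ∑ i, dt i * ptstar i) := by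
      rw [← Finset.sum_sub_distrib, ← Finset.sum_sub_distrib, ← Finset.sum_add_distrib]
      exact Finset.sum_congr rfl fun i _ => by ring
    rw [heq]
    have := add_le_add h1 h2
    linarith
  -- restrict sum to binding coordinates
  have hrestrict : ∑ i, (d i - dt i) * (ptstar i - pstar i)
      = ∑ i ∈ Finset.univ \ IN, (d i - dt i) * (ptstar i - pstar i) := by
    rw [eq_comm]
    apply Finset.sum_subset (Finset.subset_univ _)
    intro i _ hi
    simp only [Finset.mem_sdiff, Finset.mem_univ, true_and, not_not] at hi
    rcases hzero i hi with ⟨h1', h2'⟩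
    rw [h1', h2']; ring
  have hS' : ∑ i ∈ Finset.univ \ IN, (ptstar i - pstar i) ^ 2 ≤ S := by
    rw [hS, Finset.sum_congr rfl fun i _ => (hsq i).symm]
    exact Finset.sum_le_sum_of_subset_of_nonneg (Finset.sdiff_subset)
      (fun i _ _ => sq_nonneg _)
  have hCS := Finset.sum_mul_sq_le_sq_mul_sq (Finset.univ \ IN)
    (fun i => d i - dt i) (fun i => ptstar i - pstar i)
  have hKSnn : 0 ≤ K * S := mul_nonneg hK.le hSnn
  have hsq2 : (K * S) ^ 2 ≤ (∑ i ∈ Finset.univ \ IN, (d i - dt i) ^ 2) * S := by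
    calc (K * S) ^ 2 ≤ (∑ i ∈ Finset.univ \ IN, (d i - dt i) * (ptstar i - pstar i)) ^ 2 := by
          apply pow_le_pow_left₀ hKSnn
          rw [← hrestrict]; exact hKS
      _ ≤ (∑ i ∈ Finset.univ \ IN, (d i - dt i) ^ 2)
            * ∑ i ∈ Finset.univ \ IN, (ptstar i - pstar i) ^ 2 := hCS
      _ ≤ (∑ i ∈ Finset.univ \ IN, (d i - dt i) ^ 2) * S := by
          exact mul_le_mul_of_nonneg_left hS' hA
  rcases eq_or_lt_of_le hSnn with h0 | h0
  · rw [← h0]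
    positivity
  · rw [div_mul_eq_mul_div, le_div_iff₀ (by positivity), one_mul]
    nlinarith [hsq2, h0]
end
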